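/- There exist absolute constants c₁ > 0 and c₂ > 0 such that for every integer E ≥ 1, every toral eigenfunction f with frequency E and every z ∈ ℝ² with f(z) = 0, one has ℋ¹({x ∈ B(z, c₁/√E) : f(x) = 0}) ≥ c₂/√E. -/

import Mathlib

open MeasureTheory Metric

noncomputable section

/-- The set of lattice points on the circle of radius `√E`. -/
def latticeE (E : ℕ) : Finset (ℤ × ℤ) :=
  ((Finset.Icc (-(E : ℤ)) (E : ℤ)) ×ˢ (Finset.Icc (-(E : ℤ)) (E : ℤ))).filter
    (fun ξ => ξ.1 ^ 2 + ξ.2 ^ 2 = (E : ℤ))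

/-- A toral eigenfunction with frequency `E`: a real-valued trigonometric polynomial
`f(x) = ∑_{‖ξ‖² = E} a_ξ e^{2πi⟨ξ,x⟩}` with `a_{-ξ} = conj (a_ξ)` and not all
coefficients zero. -/
def IsToralEigenfunction (E : ℕ) (f : EuclideanSpace ℝ (Fin 2) → ℝ) : Prop :=
  ∃ a : ℤ × ℤ → ℂ,
    (∀ ξ : ℤ × ℤ, a (-ξ) = starRingEnd ℂ (a ξ)) ∧
    (∃ ξ ∈ latticeE E, a ξ ≠ 0) ∧
    ∀ x : EuclideanSpace ℝ (Fin 2),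
      (f x : ℂ) = ∑ ξ ∈ latticeE E,
        a ξ * Complex.exp (2 * Real.pi * Complex.I *
          ((ξ.1 : ℂ) * (x 0 : ℂ) + (ξ.2 : ℂ) * (x 1 : ℂ)))

/-!
Every frequency `ξ` of `f` has `‖ξ‖ = √E`, so by rotation invariance the mean of the plane wave
`e^{2πi⟨ξ,·⟩}` over the circle of radius `s` about `z` is `e^{2πi⟨ξ,z⟩}` times a factor
independent of `ξ`. Hence the mean of `f` over that circle is a multiple of `f z = 0`, and the
continuous `f` vanishes somewhere on every circle about `z`. The 1-Lipschitz map `x ↦ ‖x - z‖`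
therefore sends the nodal set in `B(z, r)` onto `[0, r)`, so its length is at least `r`;
take `r = 1/√E`.
-/

open Real

lemma intervalIntegral_comp_mul_cos_add_mul_sin {F : Type*} [NormedAddCommGroup F]
    [NormedSpace ℝ F] (g : ℝ → F) (a b : ℝ) :
    ∫ θ in (0 : ℝ)..2 * π, g (a * cos θ + b * sin θ)
      = ∫ θ in (0 : ℝ)..2 * π, g (√(a ^ 2 + b ^ 2) * cos θ) := by
  set w : ℂ := ⟨a, b⟩
  have hw : ‖w‖ = √(a ^ 2 + b ^ 2) := by
    simp only [Complex.norm_def, Complex.normSq_apply, w, sq]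
  have hrot : ∀ θ, a * cos θ + b * sin θ = ‖w‖ * cos (θ - w.arg) := fun θ => by
    rw [cos_sub]
    linear_combination (-cos θ) * Complex.norm_mul_cos_arg w - sin θ * Complex.norm_mul_sin_arg w
  have hper : Function.Periodic (fun θ => g (‖w‖ * cos θ)) (2 * π) := fun θ => by
    simp only [cos_add_two_pi]
  simp_rw [hrot, ← hw]
  rw [intervalIntegral.integral_comp_sub_right (fun θ => g (‖w‖ * cos θ)), zero_sub,
    show 2 * π - w.arg = -w.arg + 2 * π by ring, hper.intervalIntegral_add_eq (-w.arg) 0,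
    zero_add]

def circlePoint (z : EuclideanSpace ℝ (Fin 2)) (s θ : ℝ) : EuclideanSpace ℝ (Fin 2) :=
  !₂[z 0 + s * cos θ, z 1 + s * sin θ]

lemma dist_circlePoint (z : EuclideanSpace ℝ (Fin 2)) {s : ℝ} (hs : 0 ≤ s) (θ : ℝ) :
    dist (circlePoint z s θ) z = s := by
  rw [EuclideanSpace.dist_eq, Fin.sum_univ_two]
  conv_rhs => rw [← sqrt_sq hs]
  congr 1
  simp only [circlePoint, Matrix.cons_val_zero, Matrix.cons_val_one, Matrix.cons_val_fin_one,
    dist_self_add_left, norm_mul, norm_eq_abs, mul_pow, sq_abs]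
  linear_combination s ^ 2 * sin_sq_add_cos_sq θ

lemma continuous_circlePoint (z : EuclideanSpace ℝ (Fin 2)) (s : ℝ) :
    Continuous (circlePoint z s) := by
  unfold circlePoint
  fun_prop

namespace IsToralEigenfunction

variable {E : ℕ} {f : EuclideanSpace ℝ (Fin 2) → ℝ}

protected lemma continuous (hf : IsToralEigenfunction E f) : Continuous f := by
  obtain ⟨a, -, -, ha⟩ := hf
  have hcont : Continuous fun x => (f x : ℂ) := by
    simp_rw [ha]
    fun_prop
  exact Complex.continuous_re.comp hcont

lemma integral_circlePoint (hf : IsToralEigenfunction E f) (z : EuclideanSpace ℝ (Fin 2))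
    (s : ℝ) :
    ∫ θ in (0 : ℝ)..2 * π, (f (circlePoint z s θ) : ℂ)
      = f z * ∫ θ in (0 : ℝ)..2 * π, Complex.exp (↑(2 * π * s * (√E * cos θ)) * Complex.I) := by
  obtain ⟨a, -, -, ha⟩ := hf
  set g : ℝ → ℂ := fun t => Complex.exp (↑(2 * π * s * t) * Complex.I)
  set c : ℤ × ℤ → ℂ := fun ξ =>
    a ξ * Complex.exp (2 * π * Complex.I * ((ξ.1 : ℂ) * (z 0 : ℂ) + (ξ.2 : ℂ) * (z 1 : ℂ)))
  have hterm : ∀ (ξ : ℤ × ℤ) θ, a ξ * Complex.exp (2 * π * Complex.I *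
      ((ξ.1 : ℂ) * (circlePoint z s θ 0 : ℂ) + (ξ.2 : ℂ) * (circlePoint z s θ 1 : ℂ)))
      = c ξ * g (ξ.1 * cos θ + ξ.2 * sin θ) := fun ξ θ => by
    simp only [c, g, circlePoint, mul_assoc, ← Complex.exp_add]
    push_cast
    congr 2
    ring
  have hmean : ∀ ξ ∈ latticeE E, ∫ θ in (0 : ℝ)..2 * π, g (ξ.1 * cos θ + ξ.2 * sin θ)
      = ∫ θ in (0 : ℝ)..2 * π, g (√E * cos θ) := fun ξ hξ => by
    have hE : (ξ.1 : ℝ) ^ 2 + (ξ.2 : ℝ) ^ 2 = E := by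
      exact_mod_cast (Finset.mem_filter.mp hξ).2
    rw [intervalIntegral_comp_mul_cos_add_mul_sin, hE]
  calc ∫ θ in (0 : ℝ)..2 * π, (f (circlePoint z s θ) : ℂ)
      = ∫ θ in (0 : ℝ)..2 * π, ∑ ξ ∈ latticeE E, c ξ * g (ξ.1 * cos θ + ξ.2 * sin θ) := by
        simp_rw [ha, hterm]
    _ = ∑ ξ ∈ latticeE E, c ξ * ∫ θ in (0 : ℝ)..2 * π, g (ξ.1 * cos θ + ξ.2 * sin θ) := by
        rw [intervalIntegral.integral_finsetSum fun ξ _ =>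
          (by fun_prop : Continuous _).intervalIntegrable _ _]
        simp_rw [intervalIntegral.integral_const_mul]
    _ = f z * ∫ θ in (0 : ℝ)..2 * π, g (√E * cos θ) := by
        rw [Finset.sum_congr rfl fun ξ hξ => congrArg (c ξ * ·) (hmean ξ hξ), ← Finset.sum_mul,
          ha z]

lemma exists_dist_eq_of_eq_zero (hf : IsToralEigenfunction E f) {z : EuclideanSpace ℝ (Fin 2)}
    (hz : f z = 0) {s : ℝ} (hs : 0 ≤ s) : ∃ x, dist x z = s ∧ f x = 0 := by
  have hint : ∫ θ in (0 : ℝ)..2 * π, f (circlePoint z s θ) = 0 := by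
    have h := hf.integral_circlePoint z s
    rw [hz, Complex.ofReal_zero, zero_mul, intervalIntegral.integral_ofReal] at h
    exact_mod_cast h
  obtain ⟨θ, -, hθ⟩ := exists_eq_interval_average two_pi_pos.ne
    (hf.continuous.comp (continuous_circlePoint z s)).continuousOn
  refine ⟨circlePoint z s θ, dist_circlePoint z hs θ, ?_⟩
  rw [← Function.comp_apply (f := f), hθ, interval_average_eq, Function.comp_def, hint, smul_zero]

end IsToralEigenfunction

lemma ofReal_le_hausdorffMeasure_one_of_Ico_subset_image_dist {X : Type*} [MetricSpace X]
    [MeasurableSpace X] [BorelSpace X] {z : X} {Z : Set X} {r : ℝ}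
    (h : Set.Ico 0 r ⊆ (dist · z) '' Z) : ENNReal.ofReal r ≤ μH[1] Z :=
  calc ENNReal.ofReal r = μH[1] (Set.Ico 0 r) := by
        rw [hausdorffMeasure_real, Real.volume_Ico, sub_zero]
    _ ≤ μH[1] ((dist · z) '' Z) := measure_mono h
    _ ≤ μH[1] Z := by
        simpa using (LipschitzWith.dist_left z).hausdorffMeasure_image_le zero_le_one Z

/-- Local lower bound for the nodal length around a zero: there are absolute constants
`c₁, c₂ > 0` such that if a toral eigenfunction `f` of frequency `E ≥ 1` vanishes at `z`,
then the nodal length of `f` in `B(z, c₁/√E)` is at least `c₂/√E`. -/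
theorem nodal_length_near_zero :
    ∃ c₁ : ℝ, 0 < c₁ ∧ ∃ c₂ : ℝ, 0 < c₂ ∧
      ∀ E : ℕ, 1 ≤ E →
        ∀ f : EuclideanSpace ℝ (Fin 2) → ℝ, IsToralEigenfunction E f →
          ∀ z : EuclideanSpace ℝ (Fin 2), f z = 0 →
            ENNReal.ofReal (c₂ / Real.sqrt E)
              ≤ μH[1] {x : EuclideanSpace ℝ (Fin 2) |
                  x ∈ ball z (c₁ / Real.sqrt E) ∧ f x = 0} := by
  refine ⟨1, one_pos, 1, one_pos, fun E _ f hf z hz => ?_⟩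
  refine ofReal_le_hausdorffMeasure_one_of_Ico_subset_image_dist (z := z) ?_
  rintro s ⟨hs, hsr⟩
  obtain ⟨x, hxz, hfx⟩ := hf.exists_dist_eq_of_eq_zero hz hs
  exact ⟨x, ⟨mem_ball.2 (hxz ▸ hsr), hfx⟩, hxz⟩
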